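/- Let Hyp be magic hypotheses with instantiation relation inst, specialisation relation specH on Hyp and specI on instantiated hypotheses, and entailment entails on instantiated hypotheses. Assume: (a) specI I1 I2 implies every example entailed by I2 is entailed by I1; (b) if specH H1 H2 and inst H2 I2, then there exists I1 with inst H1 I1 and specI I1 I2. If every instantiation I1 of H1 satisfying ∃ e ∈ E⁺, entails I1 e is incomplete, and E⁺ is nonempty, then every instantiation I2 of any specialisation H2 of H1 is incomplete. -/

import Mathlib

/-! A specialisation `H2` of `H1` entails no more than the corresponding instantiation of `H1`.
If an instantiation `I2` of `H2` covers some positive example, that instantiation of `H1` covers it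
too and is therefore incomplete, and a positive example it misses is missed by `I2` as well.
If `I2` covers no positive example, it is incomplete because `E⁺` is nonempty. -/

section Incompleteness

variable {IHyp Ex : Type*} (entails : IHyp → Ex → Prop) (Epos : Set Ex)

def Incomplete (I : IHyp) : Prop := ∃ e ∈ Epos, ¬ entails I e

variable {entails Epos}

theorem Incomplete.of_entails_imp {I1 I2 : IHyp} (hsub : ∀ e, entails I2 e → entails I1 e)
    (h : Incomplete entails Epos I1) : Incomplete entails Epos I2 := by
  obtain ⟨e, he, hnot⟩ := h
  exact ⟨e, he, mt (hsub e) hnot⟩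

theorem incomplete_of_not_covers {I : IHyp} (hne : Epos.Nonempty)
    (h : ¬ ∃ e ∈ Epos, entails I e) : Incomplete entails Epos I := by
  obtain ⟨e, he⟩ := hne
  exact ⟨e, he, fun hent => h ⟨e, he, hent⟩⟩

end Incompleteness

theorem extended_specialisation_constraint {Hyp IHyp Ex : Type*}
    (inst : Hyp → IHyp → Prop) (specH : Hyp → Hyp → Prop)
    (specI : IHyp → IHyp → Prop) (entails : IHyp → Ex → Prop)
    (ha : ∀ I1 I2, specI I1 I2 → ∀ e, entails I2 e → entails I1 e)
    (hb : ∀ H1 H2 I2, specH H1 H2 → inst H2 I2 → ∃ I1, inst H1 I1 ∧ specI I1 I2)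
    (Epos : Set Ex) (hne : Epos.Nonempty) (H1 : Hyp)
    (h : ∀ I1, inst H1 I1 → (∃ e ∈ Epos, entails I1 e) → ∃ e ∈ Epos, ¬ entails I1 e) :
    ∀ H2, specH H1 H2 → ∀ I2, inst H2 I2 → ∃ e ∈ Epos, ¬ entails I2 e := by
  intro H2 hspecH I2 hinst2
  obtain ⟨I1, hinst1, hspecI⟩ := hb H1 H2 I2 hspecH hinst2
  have hsub := ha I1 I2 hspecI
  by_cases hcovers : ∃ e ∈ Epos, entails I2 e
  · obtain ⟨e, he, hent⟩ := hcovers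
    exact Incomplete.of_entails_imp hsub (h I1 hinst1 ⟨e, he, hsub e hent⟩)
  · exact incomplete_of_not_covers hne hcovers
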